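/- Let F be a finite field with q elements and let e ≥ 2 be an integer. Then the bilinear forms graph Bil_q(e×2) is a strongly regular graph with parameters (v, k, λ, μ) = (q^{2e}, (q^e−1)(q+1), q^e−2+q(q−1), q(q+1)); that is, it has q^{2e} vertices, every vertex has (q^e−1)(q+1) neighbours, any two adjacent vertices have exactly q^e−2+q(q−1) common neighbours, and any two distinct non-adjacent vertices have exactly q(q+1) common neighbours. -/

import Mathlib

open SimpleGraph

/-- The bilinear forms graph on `e × d` matrices over a field `F`:
two matrices are adjacent iff their difference has rank 1. -/
def bilGraph (F : Type) [Field F] (e d : ℕ) : SimpleGraph (Matrix (Fin e) (Fin d) F) where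
  Adj A B := A ≠ B ∧ (A - B).rank = 1
  symm := by
    constructor
    intro A B h
    refine ⟨h.1.symm, ?_⟩
    have hn : B - A = -(A - B) := by abel
    have hml : (-(A - B)).mulVecLin = -(A - B).mulVecLin := by
      ext v
      simp [Matrix.neg_mulVec]
    have hr : (-(A - B)).rank = (A - B).rank := by
      unfold Matrix.rank
      rw [hml, LinearMap.range_neg]
    rw [hn, hr]
    exact h.2
  loopless := by constructor; intro A h; exact h.1 rfl

/-!
Translating by `x`, the neighbours of `x` are the matrices `x - C` with `rank C = 1`, and the
common neighbours of `x` and `y` are the `x - C` with `rank C = rank (x - y - C) = 1`, so all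
three counts are counts of rank-one matrices.

A rank-one matrix is `u vᵀ` with `u, v ≠ 0`, and `Fˣ` acts freely on such pairs by
`c • (u, v) = (c u, c⁻¹ v)` with the rank-one matrices as orbits; hence there are
`(q^e - 1)(q^2 - 1) / (q - 1)` rank-one `e × 2` matrices.

If `D = u vᵀ`, a rank-one `C = w bᵀ` with `rank (D - C) = 1` either has `w ∈ F u`, so that
`C = u v'` with `v' ∉ {0, v}` (`q^2 - 2` choices), or has `b ∈ F v`, because
`D - C = [u w] [v; -b]` with `u, w` independent, so that `C = w' v` with `w' ∉ F u`
(`q^e - q` choices).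

If `rank D = 2`, then `D = C + (D - C)` forces the column space of `C` into that of `D`, so
`C = D N` where `N` and `1 - N` are `2 × 2` matrices of rank one. These `N` are the `u vᵀ` with
`v ⬝ u = 1`, and there are `(q^2 - 1) q / (q - 1) = q (q + 1)` of them.
-/

open Matrix Module

namespace Matrix

variable {F : Type*} [Field F] {m n : Type*}

theorem exists_units_smul_of_vecMulVec_eq {u u' : m → F} {v v' : n → F} (hu : u ≠ 0)
    (hv : v ≠ 0) (h : vecMulVec u' v' = vecMulVec u v) :
    ∃ c : Fˣ, c • u = u' ∧ c⁻¹ • v = v' := by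
  have entry : ∀ i j, u' i * v' j = u i * v j := fun i j => congrFun (congrFun h i) j
  obtain ⟨i, hi⟩ : ∃ i, u i ≠ 0 := Function.ne_iff.1 hu
  obtain ⟨j, hj⟩ : ∃ j, v j ≠ 0 := Function.ne_iff.1 hv
  have hij : u' i * v' j ≠ 0 := entry i j ▸ mul_ne_zero hi hj
  refine ⟨Units.mk0 (u' i / u i) (div_ne_zero (left_ne_zero_of_mul hij) hi),
    funext fun k => ?_, funext fun l => ?_⟩
  · simp only [Units.smul_def, Units.val_mk0, Pi.smul_apply, smul_eq_mul]
    apply mul_right_cancel₀ (right_ne_zero_of_mul hij)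
    field_simp
    linear_combination u k * entry i j - u i * entry k j
  · simp only [Units.smul_def, Units.val_inv_eq_inv_val, Units.val_mk0, Pi.smul_apply,
      smul_eq_mul, inv_div]
    field_simp [left_ne_zero_of_mul hij]
    linear_combination -entry i l

theorem vecMulVec_right_injective {u : m → F} (hu : u ≠ 0) :
    Function.Injective (vecMulVec u : (n → F) → Matrix m n F) := by
  obtain ⟨i, hi⟩ : ∃ i, u i ≠ 0 := Function.ne_iff.1 hu
  exact fun a b h => funext fun j => mul_left_cancel₀ hi (congrFun (congrFun h i) j)

theorem vecMulVec_left_injective {v : n → F} (hv : v ≠ 0) :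
    Function.Injective (vecMulVec · v : (m → F) → Matrix m n F) := by
  obtain ⟨j, hj⟩ : ∃ j, v j ≠ 0 := Function.ne_iff.1 hv
  exact fun a b h => funext fun i => mul_right_cancel₀ hj (congrFun (congrFun h i) j)

theorem ker_mulVecLin_of_pair_eq_bot {u w : m → F} (h : LinearIndependent F ![u, w]) :
    LinearMap.ker (of fun i => ![u i, w i]).mulVecLin = ⊥ := by
  refine LinearMap.ker_eq_bot'.2 fun x hx => ?_
  have hx' : x 0 • u + x 1 • w = 0 := by
    rw [← hx]
    ext i
    simp [mulVec, dotProduct, Fin.sum_univ_two, mul_comm]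
  obtain ⟨h0, h1⟩ := LinearIndependent.pair_iff.1 h _ _ hx'
  ext j
  fin_cases j <;> assumption

theorem of_pair_mul_of_pair (u w : m → F) (v b : n → F) :
    of (fun i => ![u i, w i]) * of ![v, b] = vecMulVec u v + vecMulVec w b := by
  ext i j
  simp [mul_apply, Fin.sum_univ_two, vecMulVec_apply]

section Rank

variable [Fintype n]

theorem rank_neg (A : Matrix m n F) : (-A).rank = A.rank := by
  have hneg : (-A).mulVecLin = -A.mulVecLin := by
    ext v
    simp
  rw [rank, rank, hneg, LinearMap.range_neg]

theorem rank_eq_zero_iff {A : Matrix m n F} : A.rank = 0 ↔ A = 0 := by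
  classical
  rw [rank, Submodule.finrank_eq_zero, LinearMap.range_eq_bot]
  constructor
  · intro h
    ext i j
    simpa using congrFun (LinearMap.congr_fun h (Pi.single j 1)) i
  · rintro rfl
    ext v
    simp

theorem rank_add_finrank_ker (A : Matrix m n F) :
    A.rank + finrank F (LinearMap.ker A.mulVecLin) = Fintype.card n := by
  rw [rank, LinearMap.finrank_range_add_finrank_ker, finrank_fintype_fun_eq_card]

theorem rank_eq_card_iff_ker_mulVecLin_eq_bot {A : Matrix m n F} :
    A.rank = Fintype.card n ↔ LinearMap.ker A.mulVecLin = ⊥ := by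
  rw [← Submodule.finrank_eq_zero]
  have hA := A.rank_add_finrank_ker
  omega

theorem rank_mul_of_ker_mulVecLin_eq_bot {k : Type*} [Fintype k]
    {P : Matrix m k F} (hP : LinearMap.ker P.mulVecLin = ⊥) (Q : Matrix k n F) :
    (P * Q).rank = Q.rank := by
  have h := (P * Q).rank_add_finrank_ker
  rw [mulVecLin_mul, LinearMap.ker_comp_of_ker_eq_bot _ hP, ← Q.rank_add_finrank_ker] at h
  omega

theorem mul_left_injective_of_ker_mulVecLin_eq_bot {k : Type*} [Fintype k] {D : Matrix m k F}
    (hD : LinearMap.ker D.mulVecLin = ⊥) :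
    Function.Injective (D * · : Matrix k n F → Matrix m n F) := by
  intro N N' h
  have hrank := rank_mul_of_ker_mulVecLin_eq_bot hD (N - N')
  rwa [Matrix.mul_sub, sub_eq_zero.2 h, rank_zero, eq_comm, rank_eq_zero_iff, sub_eq_zero] at hrank

theorem exists_mul_eq_of_range_mulVecLin_le {k : Type*} [Fintype k] {C : Matrix m n F}
    {D : Matrix m k F} (h : LinearMap.range C.mulVecLin ≤ LinearMap.range D.mulVecLin) :
    ∃ N : Matrix k n F, D * N = C := by
  classical
  choose x hx using fun j => h ⟨Pi.single j 1, rfl⟩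
  simp only [mulVecLin_apply, mulVec_single_one] at hx
  refine ⟨(of x)ᵀ, ?_⟩
  ext i j
  simpa [mulVec, dotProduct, mul_apply] using congrFun (hx j) i

theorem range_mulVecLin_le_of_rank_add_rank_sub_le {C D : Matrix m n F}
    (h : C.rank + (D - C).rank ≤ D.rank) :
    LinearMap.range C.mulVecLin ≤ LinearMap.range D.mulVecLin := by
  have hle : LinearMap.range D.mulVecLin ≤
      LinearMap.range C.mulVecLin ⊔ LinearMap.range (D - C).mulVecLin := by
    rintro _ ⟨x, rfl⟩
    have hx : D.mulVecLin x = C.mulVecLin x + (D - C).mulVecLin x := by simp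
    rw [hx]
    exact Submodule.add_mem_sup (LinearMap.mem_range_self _ x) (LinearMap.mem_range_self _ x)
  have heq := Submodule.eq_of_le_of_finrank_le hle
    ((Submodule.finrank_add_le_finrank_add_finrank _ _).trans h)
  exact heq ▸ le_sup_left

theorem rank_vecMulVec_of_ne_zero {u : m → F} {v : n → F} (hu : u ≠ 0) (hv : v ≠ 0) :
    (vecMulVec u v).rank = 1 := by
  obtain ⟨i, hi⟩ : ∃ i, u i ≠ 0 := Function.ne_iff.1 hu
  obtain ⟨j, hj⟩ : ∃ j, v j ≠ 0 := Function.ne_iff.1 hv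
  have h0 := rank_eq_zero_iff.not.2 fun h : vecMulVec u v = 0 =>
    mul_ne_zero hi hj (by simpa [vecMulVec_apply] using congrFun (congrFun h i) j)
  have h1 := rank_vecMulVec_le u v
  omega

theorem rank_eq_one_iff_exists_vecMulVec {A : Matrix m n F} :
    A.rank = 1 ↔ ∃ u v, u ≠ 0 ∧ v ≠ 0 ∧ vecMulVec u v = A := by
  classical
  refine ⟨fun h => ?_, fun ⟨u, v, hu, hv, hA⟩ => hA ▸ rank_vecMulVec_of_ne_zero hu hv⟩
  obtain ⟨u, hu, hspan⟩ := finrank_eq_one_iff'.1 h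
  choose c hc using fun j => hspan ⟨A *ᵥ Pi.single j 1, Pi.single j 1, rfl⟩
  have hA : vecMulVec u c = A := by
    ext i j
    simpa [vecMulVec_apply, mul_comm] using congrFun (congrArg Subtype.val (hc j)) i
  refine ⟨u, c, fun h0 => hu (Subtype.ext h0), fun h0 => ?_, hA⟩
  have hA0 : A = 0 := by
    ext i j
    simp [← hA, h0, vecMulVec_apply]
  rw [hA0, rank_zero] at h
  exact zero_ne_one h

theorem rank_one_sub_vecMulVec_eq_one_iff {u v : Fin 2 → F} :
    (1 - vecMulVec u v).rank = 1 ↔ v ⬝ᵥ u = 1 := by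
  have hle := (1 - vecMulVec u v).rank_le_card_width
  have h2 := (1 - vecMulVec u v).rank_eq_card_iff_ker_mulVecLin_eq_bot
  simp only [Fintype.card_fin] at hle h2
  have mem_ker (x : Fin 2 → F) :
      x ∈ LinearMap.ker (1 - vecMulVec u v).mulVecLin ↔ x = (v ⬝ᵥ x) • u := by
    rw [LinearMap.mem_ker, mulVecLin_apply, sub_mulVec, one_mulVec, vecMulVec_mulVec,
      sub_eq_zero, op_smul_eq_smul]
  constructor
  · intro h
    obtain ⟨x, hx, hx0⟩ := (Submodule.ne_bot_iff _).1 fun hb => by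
      have := h2.2 hb
      omega
    rw [mem_ker] at hx
    have hvx : v ⬝ᵥ x ≠ 0 := fun h0 => hx0 (by rw [hx, h0, zero_smul])
    have hdot := congrArg (v ⬝ᵥ ·) hx
    simp only [dotProduct_smul, smul_eq_mul] at hdot
    exact (mul_eq_left₀ hvx).1 hdot.symm
  · intro h
    have hu : u ≠ 0 := by
      rintro rfl
      simp at h
    have hker : LinearMap.ker (1 - vecMulVec u v).mulVecLin ≠ ⊥ :=
      (Submodule.ne_bot_iff _).2 ⟨u, (mem_ker u).2 (by rw [h, one_smul]), hu⟩
    have h0 : (1 - vecMulVec u v).rank ≠ 0 := by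
      rw [Ne, rank_eq_zero_iff, sub_eq_zero]
      intro h1
      have hle1 := rank_vecMulVec_le u v
      rw [← h1, rank_one, Fintype.card_fin] at hle1
      omega
    have hne2 := h2.not.2 hker
    omega

theorem mem_span_of_rank_vecMulVec_sub_vecMulVec_eq_one {u w : m → F} {v b : n → F}
    (huw : LinearIndependent F ![u, w]) (hv : v ≠ 0)
    (h : (vecMulVec u v - vecMulVec w b).rank = 1) : b ∈ Submodule.span F {v} := by
  rw [sub_eq_add_neg, ← vecMulVec_neg, ← of_pair_mul_of_pair,
    rank_mul_of_ker_mulVecLin_eq_bot (ker_mulVecLin_of_pair_eq_bot huw)] at h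
  have hdep : ¬LinearIndependent F ![v, -b] := fun hind => by
    have h2 := hind.rank_matrix (M := of ![v, -b])
    rw [Fintype.card_fin] at h2
    omega
  obtain ⟨a, ha⟩ := not_forall_not.1 (mt (LinearIndependent.pair_iff' hv).2 hdep)
  exact Submodule.mem_span_singleton.2 ⟨-a, by rw [neg_smul, ha, neg_neg]⟩

theorem setOf_rank_eq_one_and_rank_vecMulVec_sub_eq_one {u : m → F} {v : n → F} (hu : u ≠ 0)
    (hv : v ≠ 0) :
    {C : Matrix m n F | C.rank = 1 ∧ (vecMulVec u v - C).rank = 1} =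
      vecMulVec u '' {v' | v' ≠ 0 ∧ v' ≠ v} ∪
        (vecMulVec · v) '' (Submodule.span F {u} : Set (m → F))ᶜ := by
  ext C
  constructor
  · rintro ⟨hC, hDC⟩
    obtain ⟨w, b, hw, hb, rfl⟩ := rank_eq_one_iff_exists_vecMulVec.1 hC
    by_cases hwu : w ∈ Submodule.span F {u}
    · obtain ⟨a, rfl⟩ := Submodule.mem_span_singleton.1 hwu
      have ha : a ≠ 0 := by
        rintro rfl
        simp at hw
      refine Or.inl ⟨a • b, ⟨smul_ne_zero ha hb, fun hab => ?_⟩, by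
        rw [vecMulVec_smul, smul_vecMulVec]⟩
      rw [← hab, smul_vecMulVec, ← vecMulVec_smul, sub_self, rank_zero] at hDC
      exact zero_ne_one hDC
    · have huw : LinearIndependent F ![u, w] := (LinearIndependent.pair_iff' hu).2 fun a h =>
        hwu (h ▸ Submodule.smul_mem _ a (Submodule.mem_span_singleton_self u))
      obtain ⟨a, rfl⟩ := Submodule.mem_span_singleton.1
        (mem_span_of_rank_vecMulVec_sub_vecMulVec_eq_one huw hv hDC)
      have ha : a ≠ 0 := by
        rintro rfl
        simp at hb
      exact Or.inr ⟨a • w, (Submodule.smul_mem_iff _ ha).not.2 hwu,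
        (smul_vecMulVec a w v).trans (vecMulVec_smul a w v).symm⟩
  · rintro (⟨v', ⟨hv'0, hv'v⟩, rfl⟩ | ⟨w, hwu, rfl⟩)
    · refine ⟨rank_vecMulVec_of_ne_zero hu hv'0, ?_⟩
      rw [← vecMulVec_sub]
      exact rank_vecMulVec_of_ne_zero hu (sub_ne_zero.2 hv'v.symm)
    · have hw : w ≠ 0 := fun h => hwu (h ▸ Submodule.zero_mem _)
      have huw : u - w ≠ 0 := fun h =>
        hwu (sub_eq_zero.1 h ▸ Submodule.mem_span_singleton_self u)
      refine ⟨rank_vecMulVec_of_ne_zero hw hv, ?_⟩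
      rw [← sub_vecMulVec]
      exact rank_vecMulVec_of_ne_zero huw hv

theorem setOf_rank_eq_one_and_rank_sub_eq_one_of_rank_eq_two {D : Matrix m (Fin 2) F}
    (hD : D.rank = 2) :
    {C : Matrix m (Fin 2) F | C.rank = 1 ∧ (D - C).rank = 1} =
      (D * ·) '' {N : Matrix (Fin 2) (Fin 2) F | N.rank = 1 ∧ (1 - N).rank = 1} := by
  have hker := rank_eq_card_iff_ker_mulVecLin_eq_bot.1 (hD.trans (Fintype.card_fin 2).symm)
  have hsub (N : Matrix (Fin 2) (Fin 2) F) : D - D * N = D * (1 - N) := by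
    rw [Matrix.mul_sub, Matrix.mul_one]
  ext C
  constructor
  · rintro ⟨hC, hDC⟩
    obtain ⟨N, rfl⟩ := exists_mul_eq_of_range_mulVecLin_le
      (range_mulVecLin_le_of_rank_add_rank_sub_le (C := C) (D := D) (by omega))
    rw [rank_mul_of_ker_mulVecLin_eq_bot hker] at hC
    rw [hsub, rank_mul_of_ker_mulVecLin_eq_bot hker] at hDC
    exact ⟨N, ⟨hC, hDC⟩, rfl⟩
  · rintro ⟨N, ⟨hN, h1N⟩, rfl⟩
    rw [Set.mem_ofPred_eq, hsub, rank_mul_of_ker_mulVecLin_eq_bot hker,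
      rank_mul_of_ker_mulVecLin_eq_bot hker]
    exact ⟨hN, h1N⟩

end Rank

section Counting

open Finset

variable [Fintype F] [Fintype n]

theorem ncard_setOf_ne_zero [Fintype m] :
    {u : m → F | u ≠ 0}.ncard = Fintype.card F ^ Fintype.card m - 1 := by
  have hcompl : {u : m → F | u ≠ 0} = {0}ᶜ := by
    ext
    simp
  rw [hcompl, Set.ncard_compl, Set.ncard_singleton, Nat.card_fun, Nat.card_eq_fintype_card,
    Nat.card_eq_fintype_card]

theorem ncard_image_vecMulVec_mul [Fintype m] (P : Set ((m → F) × (n → F)))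
    (hP : ∀ p ∈ P, p.1 ≠ 0 ∧ p.2 ≠ 0) (hsmul : ∀ p ∈ P, ∀ c : Fˣ, (c • p.1, c⁻¹ • p.2) ∈ P) :
    ((fun p => vecMulVec p.1 p.2) '' P).ncard * (Fintype.card F - 1) = P.ncard := by
  classical
  rw [Set.ncard_eq_toFinset_card' P, Set.ncard_eq_toFinset_card', Set.toFinset_image,
    card_eq_sum_card_image (fun p => vecMulVec p.1 p.2) P.toFinset, ← Fintype.card_units]
  refine (sum_const_nat fun A hA => ?_).symm
  obtain ⟨⟨u, v⟩, hp, rfl⟩ := mem_image.1 hA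
  rw [Set.mem_toFinset] at hp
  have hfib : {p ∈ P.toFinset | vecMulVec p.1 p.2 = vecMulVec u v} =
      univ.image fun c : Fˣ => (c • u, c⁻¹ • v) := by
    ext ⟨u', v'⟩
    simp only [mem_filter, Set.mem_toFinset, mem_image, mem_univ, true_and, Prod.mk.injEq]
    constructor
    · rintro ⟨-, h⟩
      exact exists_units_smul_of_vecMulVec_eq (hP _ hp).1 (hP _ hp).2 h
    · rintro ⟨c, rfl, rfl⟩
      refine ⟨hsmul _ hp c, ?_⟩
      simp [Units.smul_def, smul_vecMulVec, vecMulVec_smul, smul_smul]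
  rw [hfib, card_image_of_injective _ fun c d h =>
    Units.ext (smul_left_injective F (hP _ hp).1 (congrArg Prod.fst h)), card_univ]

theorem ncard_rank_eq_one_mul [Fintype m] :
    {A : Matrix m n F | A.rank = 1}.ncard * (Fintype.card F - 1) =
      (Fintype.card F ^ Fintype.card m - 1) * (Fintype.card F ^ Fintype.card n - 1) := by
  have hset : {A : Matrix m n F | A.rank = 1} =
        (fun p => vecMulVec p.1 p.2) '' ({u : m → F | u ≠ 0} ×ˢ {v : n → F | v ≠ 0}) := by
    ext A
    simp [rank_eq_one_iff_exists_vecMulVec]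
  rw [hset, ncard_image_vecMulVec_mul ({u | u ≠ 0} ×ˢ {v | v ≠ 0}) (fun _ hp => hp)
    fun p hp c => ?_, Set.ncard_prod, ncard_setOf_ne_zero, ncard_setOf_ne_zero]
  simpa [Units.smul_def] using hp

theorem ncard_rank_eq_one_of_width_two [Fintype m] :
    {A : Matrix m (Fin 2) F | A.rank = 1}.ncard =
      (Fintype.card F ^ Fintype.card m - 1) * (Fintype.card F + 1) := by
  have hq : 1 < Fintype.card F := Fintype.one_lt_card
  have h := ncard_rank_eq_one_mul (F := F) (m := m) (n := Fin 2)
  rw [Fintype.card_fin, ← one_pow 2, Nat.sq_sub_sq, one_pow, ← mul_assoc] at h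
  exact Nat.eq_of_mul_eq_mul_right (by omega) h

theorem ncard_dotProduct_eq_one_mul {u : n → F} (hu : u ≠ 0) :
    {v : n → F | v ⬝ᵥ u = 1}.ncard * Fintype.card F = Fintype.card F ^ Fintype.card n := by
  classical
  obtain ⟨i, hi⟩ : ∃ i, u i ≠ 0 := Function.ne_iff.1 hu
  let φ : (n → F) →+ F := AddMonoidHom.mk' (· ⬝ᵥ u) fun a b => add_dotProduct a b u
  have hφ (c : F) : c ∈ Set.range φ :=
    ⟨Pi.single i (c / u i), by simp [φ, single_dotProduct, hi]⟩
  have hfib (c : F) : #{v | φ v = c} = #{v | φ v = 1} :=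
    AddMonoidHom.card_fiber_eq_of_mem_range φ (hφ c) (hφ 1)
  rw [Set.ncard_eq_toFinset_card', Set.toFinset_ofPred]
  calc #{v | v ⬝ᵥ u = 1} * Fintype.card F = ∑ c : F, #{v | φ v = c} := by
        rw [sum_congr rfl fun c _ => hfib c, sum_const, card_univ, smul_eq_mul, mul_comm]
        rfl
    _ = Fintype.card (n → F) := (card_eq_sum_card_fiberwise (by simp)).symm
    _ = Fintype.card F ^ Fintype.card n := by simp

theorem ncard_ne_zero_and_dotProduct_eq_one_mul :
    {p : (n → F) × (n → F) | p.1 ≠ 0 ∧ p.2 ⬝ᵥ p.1 = 1}.ncard * Fintype.card F =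
      (Fintype.card F ^ Fintype.card n - 1) * Fintype.card F ^ Fintype.card n := by
  classical
  have row (u : n → F) :
      (∑ v : n → F, if u ≠ 0 ∧ v ⬝ᵥ u = 1 then 1 else 0) * Fintype.card F =
        if u ≠ 0 then Fintype.card F ^ Fintype.card n else 0 := by
    by_cases hu : u = 0
    · simp [hu]
    · simp only [ne_eq, hu, not_false_eq_true, true_and, if_true]
      rw [← card_filter, ← ncard_dotProduct_eq_one_mul hu, Set.ncard_eq_toFinset_card',
        Set.toFinset_ofPred]
  rw [Set.ncard_eq_toFinset_card', Set.toFinset_ofPred, card_filter, Fintype.sum_prod_type,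
    sum_mul]
  simp only [row]
  rw [← sum_filter, sum_const, smul_eq_mul, filter_ne', card_erase_of_mem (mem_univ _),
    card_univ, Fintype.card_fun]

theorem ncard_rank_eq_one_and_rank_one_sub_eq_one :
    {N : Matrix (Fin 2) (Fin 2) F | N.rank = 1 ∧ (1 - N).rank = 1}.ncard =
      Fintype.card F * (Fintype.card F + 1) := by
  set P := {p : (Fin 2 → F) × (Fin 2 → F) | p.1 ≠ 0 ∧ p.2 ⬝ᵥ p.1 = 1} with hP
  have hP0 (p) (hp : p ∈ P) : p.1 ≠ 0 ∧ p.2 ≠ 0 := ⟨hp.1, fun h => by simp [hP, h] at hp⟩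
  have hsmul (p) (hp : p ∈ P) (c : Fˣ) : (c • p.1, c⁻¹ • p.2) ∈ P := by
    refine ⟨by simpa [Units.smul_def] using hp.1, ?_⟩
    simpa only [Units.smul_def, smul_dotProduct, dotProduct_smul, smul_smul, Units.mul_inv,
      one_smul] using hp.2
  have hset : {N : Matrix (Fin 2) (Fin 2) F | N.rank = 1 ∧ (1 - N).rank = 1} =
      (fun p => vecMulVec p.1 p.2) '' P := by
    ext N
    constructor
    · rintro ⟨hN, h1N⟩
      obtain ⟨u, v, hu, -, rfl⟩ := rank_eq_one_iff_exists_vecMulVec.1 hN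
      exact ⟨(u, v), ⟨hu, rank_one_sub_vecMulVec_eq_one_iff.1 h1N⟩, rfl⟩
    · rintro ⟨p, hp, rfl⟩
      exact ⟨rank_vecMulVec_of_ne_zero (hP0 p hp).1 (hP0 p hp).2,
        rank_one_sub_vecMulVec_eq_one_iff.2 hp.2⟩
  have hq : 1 < Fintype.card F := Fintype.one_lt_card
  have h := ncard_ne_zero_and_dotProduct_eq_one_mul (F := F) (n := Fin 2)
  rw [← ncard_image_vecMulVec_mul P hP0 hsmul, ← hset, Fintype.card_fin, ← one_pow 2,
    Nat.sq_sub_sq, one_pow] at h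
  refine Nat.eq_of_mul_eq_mul_right (m := (Fintype.card F - 1) * Fintype.card F)
    (Nat.mul_pos (by omega) (by omega)) ?_
  rw [← mul_assoc, h]
  ring

theorem ncard_rank_eq_one_and_rank_vecMulVec_sub_eq_one [Fintype m] {u : m → F}
    {v : n → F} (hu : u ≠ 0) (hv : v ≠ 0) :
    {C : Matrix m n F | C.rank = 1 ∧ (vecMulVec u v - C).rank = 1}.ncard =
      (Fintype.card F ^ Fintype.card n - 2) +
        (Fintype.card F ^ Fintype.card m - Fintype.card F) := by
  have hdisj : Disjoint (vecMulVec u '' {v' | v' ≠ 0 ∧ v' ≠ v})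
      ((vecMulVec · v) '' (Submodule.span F {u} : Set (m → F))ᶜ) := by
    refine Set.disjoint_left.2 ?_
    rintro _ ⟨v', ⟨hv'0, -⟩, rfl⟩ ⟨w, hwu, h⟩
    obtain ⟨c, rfl, -⟩ := exists_units_smul_of_vecMulVec_eq hu hv'0 h
    exact hwu (Submodule.smul_of_tower_mem _ c (Submodule.mem_span_singleton_self u))
  have hleft : {v' : n → F | v' ≠ 0 ∧ v' ≠ v} = {0, v}ᶜ := by
    ext
    simp
  have hspan : (Submodule.span F {u} : Set (m → F)).ncard = Fintype.card F := by
    rw [← Nat.card_coe_set_eq, SetLike.coe_sort_coe,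
      ← Nat.card_congr (LinearEquiv.toSpanNonzeroSingleton F _ u hu).toEquiv,
      Nat.card_eq_fintype_card]
  rw [setOf_rank_eq_one_and_rank_vecMulVec_sub_eq_one hu hv, Set.ncard_union_eq hdisj,
    Set.ncard_image_of_injective _ (vecMulVec_right_injective hu),
    Set.ncard_image_of_injective _ (vecMulVec_left_injective hv), hleft, Set.ncard_compl,
    Set.ncard_pair hv.symm, Set.ncard_compl, hspan, Nat.card_fun, Nat.card_fun]
  simp only [Nat.card_eq_fintype_card]

theorem ncard_rank_eq_one_and_rank_sub_eq_one_of_rank_eq_two {D : Matrix m (Fin 2) F}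
    (hD : D.rank = 2) :
    {C : Matrix m (Fin 2) F | C.rank = 1 ∧ (D - C).rank = 1}.ncard =
      Fintype.card F * (Fintype.card F + 1) := by
  have hker := rank_eq_card_iff_ker_mulVecLin_eq_bot.1 (hD.trans (Fintype.card_fin 2).symm)
  rw [setOf_rank_eq_one_and_rank_sub_eq_one_of_rank_eq_two hD,
    Set.ncard_image_of_injective _ (mul_left_injective_of_ker_mulVecLin_eq_bot hker),
    ncard_rank_eq_one_and_rank_one_sub_eq_one]

end Counting

end Matrix

section BilinearFormsGraph

variable {F : Type} [Field F] {e d : ℕ}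

theorem bilGraph_adj_iff {A B : Matrix (Fin e) (Fin d) F} :
    (bilGraph F e d).Adj A B ↔ (A - B).rank = 1 :=
  ⟨And.right, fun h => ⟨fun hAB => by simp [hAB, Matrix.rank_zero] at h, h⟩⟩

theorem setOf_bilGraph_adj (x : Matrix (Fin e) (Fin d) F) :
    {y | (bilGraph F e d).Adj x y} = (x - ·) '' {C | C.rank = 1} := by
  ext y
  simp only [Set.mem_ofPred_eq, Set.mem_image, bilGraph_adj_iff]
  refine ⟨fun h => ⟨x - y, h, sub_sub_cancel x y⟩, ?_⟩
  rintro ⟨C, hC, rfl⟩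
  rwa [sub_sub_cancel]

theorem setOf_bilGraph_adj_and_adj (x y : Matrix (Fin e) (Fin d) F) :
    {z | (bilGraph F e d).Adj x z ∧ (bilGraph F e d).Adj y z} =
      (x - ·) '' {C | C.rank = 1 ∧ (x - y - C).rank = 1} := by
  have hyz (C : Matrix (Fin e) (Fin d) F) : y - (x - C) = -(x - y - C) := by abel
  ext z
  simp only [Set.mem_ofPred_eq, Set.mem_image, bilGraph_adj_iff]
  constructor
  · rintro ⟨hxz, hyz'⟩
    refine ⟨x - z, ⟨hxz, ?_⟩, sub_sub_cancel x z⟩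
    rwa [← Matrix.rank_neg, ← hyz, sub_sub_cancel]
  · rintro ⟨C, ⟨hC, hxyC⟩, rfl⟩
    rw [sub_sub_cancel, hyz, Matrix.rank_neg]
    exact ⟨hC, hxyC⟩

theorem rank_sub_eq_two_of_not_bilGraph_adj {x y : Matrix (Fin e) (Fin 2) F} (hne : x ≠ y)
    (hxy : ¬(bilGraph F e 2).Adj x y) : (x - y).rank = 2 := by
  have h0 := Matrix.rank_eq_zero_iff.not.2 (sub_ne_zero.2 hne)
  have h1 := bilGraph_adj_iff.not.1 hxy
  have h2 := (x - y).rank_le_card_width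
  rw [Fintype.card_fin] at h2
  omega

end BilinearFormsGraph

/-- For a finite field `F` with `q` elements and `e ≥ 2`, the bilinear
forms graph `Bil_q(e × 2)` is strongly regular with parameters
`(q^(2e), (q^e - 1)(q + 1), q^e - 2 + q(q - 1), q(q + 1))`. -/
theorem bil_e_by_2_strongly_regular (F : Type) [Field F] [Fintype F] (q : ℕ)
    (hq : Fintype.card F = q) (e : ℕ) (he : 2 ≤ e) :
    Fintype.card (Matrix (Fin e) (Fin 2) F) = q ^ (2 * e) ∧
      (∀ x : Matrix (Fin e) (Fin 2) F,
        {y | (bilGraph F e 2).Adj x y}.ncard = (q ^ e - 1) * (q + 1)) ∧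
      (∀ x y : Matrix (Fin e) (Fin 2) F, (bilGraph F e 2).Adj x y →
        {z | (bilGraph F e 2).Adj x z ∧ (bilGraph F e 2).Adj y z}.ncard =
          q ^ e - 2 + q * (q - 1)) ∧
      (∀ x y : Matrix (Fin e) (Fin 2) F, x ≠ y → ¬ (bilGraph F e 2).Adj x y →
        {z | (bilGraph F e 2).Adj x z ∧ (bilGraph F e 2).Adj y z}.ncard = q * (q + 1)) := by
  subst hq
  refine ⟨?_, fun x => ?_, fun x y hxy => ?_, fun x y hne hxy => ?_⟩
  · rw [Fintype.card_eq_nat_card, Matrix, Nat.card_fun, Nat.card_fun, Nat.card_eq_fintype_card,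
      Nat.card_fin, Nat.card_fin, ← pow_mul, mul_comm]
  · rw [setOf_bilGraph_adj, Set.ncard_image_of_injective _ sub_right_injective,
      ncard_rank_eq_one_of_width_two, Fintype.card_fin]
  · obtain ⟨u, v, hu, hv, huv⟩ := rank_eq_one_iff_exists_vecMulVec.1 (bilGraph_adj_iff.1 hxy)
    have hq : 2 ≤ Fintype.card F := Fintype.one_lt_card
    have hqe : Fintype.card F ^ 2 ≤ Fintype.card F ^ e := Nat.pow_le_pow_right (by omega) he
    have hq2 : 2 * Fintype.card F ≤ Fintype.card F ^ 2 := by nlinarith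
    rw [setOf_bilGraph_adj_and_adj, Set.ncard_image_of_injective _ sub_right_injective, ← huv,
      ncard_rank_eq_one_and_rank_vecMulVec_sub_eq_one hu hv, Fintype.card_fin, Fintype.card_fin,
      Nat.mul_sub_one, ← sq]
    omega
  · rw [setOf_bilGraph_adj_and_adj, Set.ncard_image_of_injective _ sub_right_injective,
      ncard_rank_eq_one_and_rank_sub_eq_one_of_rank_eq_two
        (rank_sub_eq_two_of_not_bilGraph_adj hne hxy)]
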